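/- The differential operator 𝔡 = −d²/dx² + 2(x³ + b x)d/dx − ((4m+2)x² − b) maps the space of odd polynomials of degree at most 2m+1 into itself. -/

import Mathlib

/-!
Differentiation swaps even and odd polynomials, and the coefficients of the operator are odd
(`x³ + b x`) or even (`(4m+2)x² − b`) in the right way, so oddness is preserved. The operator raises
degrees by at most two. On the leading term `q x^(2m+1)` the contributions `2x³ · (2m+1) q x^(2m)`
and `−(4m+2)x² · q x^(2m+1)` cancel, and the coefficient of `x^(2m+2)` vanishes by oddness.
-/

open Polynomial

/-- The operator 𝔡 = −d²/dx² + 2(x³ + b x)d/dx − ((4m+2)x² − b). -/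
noncomputable def sexticOpOdd (m : ℕ) (b : ℂ) (Q : Polynomial ℂ) : Polynomial ℂ :=
  -(Q.derivative.derivative) + 2 * (X ^ 3 + C b * X) * Q.derivative
    - (C (4 * (m : ℂ) + 2) * X ^ 2 - C b) * Q

namespace Polynomial

variable {R : Type*}

theorem coeff_comp_neg_X [Ring R] (p : R[X]) (n : ℕ) :
    (p.comp (-X)).coeff n = (-1) ^ n * p.coeff n := by
  rw [show (-X : R[X]) = C (-1) * X by simp, comp_C_mul_X_coeff,
    ((Commute.neg_one_left _).pow_left _).eq]

theorem coeff_eq_zero_of_comp_neg_X_eq_neg [Ring R] [IsAddTorsionFree R] {p : R[X]}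
    (hp : p.comp (-X) = -p) {n : ℕ} (hn : Even n) : p.coeff n = 0 := by
  have h := coeff_comp_neg_X p n
  rw [hp, coeff_neg, hn.neg_one_pow, one_mul] at h
  exact self_eq_neg.mp h.symm

theorem derivative_comp_neg_X [CommRing R] (p : R[X]) :
    (derivative p).comp (-X) = -derivative (p.comp (-X)) := by
  simp [derivative_comp]

end Polynomial

section sexticOpOdd

variable {m : ℕ} {b : ℂ} {Q : ℂ[X]}

theorem sexticOpOdd_comp_neg_X (hQ : Q.comp (-X) = -Q) :
    (sexticOpOdd m b Q).comp (-X) = -sexticOpOdd m b Q := by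
  have hQ' : (derivative Q).comp (-X) = derivative Q := by
    rw [derivative_comp_neg_X, hQ, derivative_neg, neg_neg]
  have hQ'' : (derivative (derivative Q)).comp (-X) = -derivative (derivative Q) := by
    rw [derivative_comp_neg_X, hQ']
  simp only [sexticOpOdd, add_comp, sub_comp, mul_comp, neg_comp, pow_comp, X_comp, C_comp,
    ofNat_comp, hQ, hQ', hQ'']
  ring

theorem coeff_sexticOpOdd_add_three (n : ℕ) :
    (sexticOpOdd m b Q).coeff (n + 3) =
      (2 * n - 4 * m) * Q.coeff (n + 1) + b * (2 * n + 7) * Q.coeff (n + 3)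
        - (n + 5) * (n + 4) * Q.coeff (n + 5) := by
  simp only [sexticOpOdd, add_mul, sub_mul, mul_assoc, coeff_add, coeff_sub, coeff_neg,
    coeff_C_mul, coeff_ofNat_mul, coeff_X_pow_mul', coeff_X_mul, coeff_derivative,
    Nat.reduceSubDiff]
  norm_num
  ring

theorem degree_sexticOpOdd_le (hQ : Q.comp (-X) = -Q) (hdeg : Q.degree ≤ (2 * m + 1 : ℕ)) :
    (sexticOpOdd m b Q).degree ≤ (2 * m + 1 : ℕ) := by
  have hQ_high {n : ℕ} (hn : 2 * m + 1 < n) : Q.coeff n = 0 :=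
    coeff_eq_zero_of_degree_lt (hdeg.trans_lt (by exact_mod_cast hn))
  rw [degree_le_iff_coeff_zero]
  intro n hn
  replace hn : 2 * m + 1 < n := by exact_mod_cast hn
  rcases Nat.even_or_odd n with h_even | h_odd
  · exact coeff_eq_zero_of_comp_neg_X_eq_neg (sexticOpOdd_comp_neg_X hQ) h_even
  obtain ⟨k, rfl⟩ : ∃ k, n = k + 3 := ⟨n - 3, by obtain ⟨j, rfl⟩ := h_odd; omega⟩
  have h_top : (2 * k - 4 * m : ℂ) * Q.coeff (k + 1) = 0 := by
    rcases (show 2 * m ≤ k by obtain ⟨j, hj⟩ := h_odd; omega).eq_or_lt with rfl | hk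
    · push_cast; ring
    · rw [hQ_high (by omega), mul_zero]
  rw [coeff_sexticOpOdd_add_three, h_top, hQ_high (by omega), hQ_high (by omega)]
  ring

end sexticOpOdd

/-- 𝔡 maps odd polynomials of degree ≤ 2m+1 into odd polynomials of degree ≤ 2m+1. -/
theorem stmt2 (m : ℕ) (b : ℂ) (Q : Polynomial ℂ)
    (hodd : Q.comp (-X) = -Q) (hdeg : Q.degree ≤ (2 * m + 1 : ℕ)) :
    (sexticOpOdd m b Q).comp (-X) = -(sexticOpOdd m b Q) ∧
      (sexticOpOdd m b Q).degree ≤ (2 * m + 1 : ℕ) :=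
  ⟨sexticOpOdd_comp_neg_X hodd, degree_sexticOpOdd_le hodd hdeg⟩
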